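/- arXiv:1710.06053 — 4 statements merged into one kernel-verified Lean document; each statement's English description precedes it below -/
import Mathlib

section
/- Assume g ≥ 1. The ℚ-linear map ∂₂ : A → V ⊗[ℚ] A defined by ∂₂(u) = Σ_{j=1}^{g} ( a_j ⊗ ι(b_j)·u − b_j ⊗ ι(a_j)·u ) is injective. -/
/-!
Context: `V g` is the ℚ-vector space with basis `a₁,…,a_g, b₁,…,b_g`;
`θ g := Σ_j (a_j·b_j − b_j·a_j)` in the tensor algebra `T(V g)`;
`A g` is the quotient of `T(V g)` by the two-sided ideal generated by `θ g`
(realized as `RingQuot` of the relation identifying `θ g` with `0`), with quotient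
map `piA g` and `iotaA g : V g →ₗ[ℚ] A g` the composite of the canonical map with `piA g`.
-/

open scoped TensorProduct

noncomputable section

/-- The ℚ-vector space with basis indexed by `Fin g ⊕ Fin g`. -/
abbrev V (g : ℕ) : Type := (Fin g ⊕ Fin g) → ℚ

/-- The basis vector `a_j`. -/
def aV (g : ℕ) (j : Fin g) : V g := Pi.single (Sum.inl j) 1

/-- The basis vector `b_j`. -/
def bV (g : ℕ) (j : Fin g) : V g := Pi.single (Sum.inr j) 1

/-- The element `θ = Σ_j (a_j b_j − b_j a_j)` of the tensor algebra `T(V)`. -/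
def theta (g : ℕ) : TensorAlgebra ℚ (V g) :=
  ∑ j : Fin g,
    (TensorAlgebra.ι ℚ (aV g j) * TensorAlgebra.ι ℚ (bV g j)
      - TensorAlgebra.ι ℚ (bV g j) * TensorAlgebra.ι ℚ (aV g j))

/-- The relation identifying `θ` with `0`; quotienting by it is quotienting by the
two-sided ideal generated by `θ`. -/
def Arel (g : ℕ) : TensorAlgebra ℚ (V g) → TensorAlgebra ℚ (V g) → Prop :=
  fun x y => x = theta g ∧ y = 0

/-- `A := T(V)/(θ)`. -/
abbrev A (g : ℕ) : Type := RingQuot (Arel g)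

/-- The quotient map `π : T(V) → A`. -/
def piA (g : ℕ) : TensorAlgebra ℚ (V g) →ₐ[ℚ] A g := RingQuot.mkAlgHom ℚ (Arel g)

/-- `ι : V → A`, the composite of the canonical linear map `V → T(V)` with `π`. -/
def iotaA (g : ℕ) : V g →ₗ[ℚ] A g :=
  (piA g).toLinearMap ∘ₗ TensorAlgebra.ι ℚ

/-! ### Auxiliary construction: a representation of `A g` on words -/

abbrev Xl (g : ℕ) : Type := Fin g ⊕ Fin g
abbrev Mw (g : ℕ) : Type := List (Xl g) →₀ ℚ

def prep (g : ℕ) (x : Xl g) : Mw g →ₗ[ℚ] Mw g :=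
  Finsupp.lmapDomain ℚ ℚ (List.cons x)

lemma prep_single (g : ℕ) (x : Xl g) (w : List (Xl g)) (c : ℚ) :
    prep g x (Finsupp.single w c) = Finsupp.single (x :: w) c := by
  simp [prep, Finsupp.mapDomain_single]

/-- Action of the letter `a_{j₀}`, rewriting the pattern `a_{j₀} b_{j₀}`. -/
def fA (g : ℕ) (j₀ : Fin g) : List (Xl g) → Mw g
  | [] => Finsupp.single [Sum.inl j₀] 1
  | y :: w =>
    if y = Sum.inr j₀ then
      prep g (Sum.inr j₀) (fA g j₀ w)
        - ∑ j ∈ Finset.univ.erase j₀,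
            (Finsupp.single (Sum.inl j :: Sum.inr j :: w) 1
              - Finsupp.single (Sum.inr j :: Sum.inl j :: w) 1)
    else Finsupp.single (Sum.inl j₀ :: y :: w) 1

def actF (g : ℕ) (j₀ : Fin g) (x : Xl g) : List (Xl g) → Mw g :=
  if x = Sum.inl j₀ then fA g j₀ else fun w => Finsupp.single (x :: w) 1

def act (g : ℕ) (j₀ : Fin g) (x : Xl g) : Mw g →ₗ[ℚ] Mw g :=
  Finsupp.lift (Mw g) ℚ (List (Xl g)) (actF g j₀ x)

lemma act_single (g : ℕ) (j₀ : Fin g) (x : Xl g) (w : List (Xl g)) :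
    act g j₀ x (Finsupp.single w 1) = actF g j₀ x w := by
  simp [act]

lemma act_of_ne (g : ℕ) (j₀ : Fin g) (x : Xl g) (hx : x ≠ Sum.inl j₀) :
    act g j₀ x = prep g x := by
  apply Finsupp.lhom_ext
  intro w c
  have h : Finsupp.single w c = c • Finsupp.single w (1:ℚ) := by simp
  rw [h, map_smul, map_smul, act_single, prep_single]
  rw [actF, if_neg hx]

lemma act_inl₀ (g : ℕ) (j₀ : Fin g) (w : List (Xl g)) :
    act g j₀ (Sum.inl j₀) (Finsupp.single w 1) = fA g j₀ w := by
  rw [act_single, actF, if_pos rfl]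

def rho0 (g : ℕ) (j₀ : Fin g) : V g →ₗ[ℚ] Module.End ℚ (Mw g) :=
  ∑ x : Xl g, (LinearMap.proj x).smulRight (act g j₀ x)

lemma rho0_single (g : ℕ) (j₀ : Fin g) (x : Xl g) :
    rho0 g j₀ (Pi.single x 1) = act g j₀ x := by
  rw [rho0, LinearMap.sum_apply, Finset.sum_eq_single x]
  · simp
  · intro y _ hy
    simp [Pi.single_apply, hy.symm]
  · simp

def rho (g : ℕ) (j₀ : Fin g) : TensorAlgebra ℚ (V g) →ₐ[ℚ] Module.End ℚ (Mw g) :=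
  TensorAlgebra.lift ℚ (rho0 g j₀)

lemma rho_iota (g : ℕ) (j₀ : Fin g) (v : V g) :
    rho g j₀ (TensorAlgebra.ι ℚ v) = rho0 g j₀ v := by
  simp [rho]

lemma key_sum (g : ℕ) (j₀ : Fin g) (w : List (Xl g)) :
    ∑ j : Fin g,
      (act g j₀ (Sum.inl j) (act g j₀ (Sum.inr j) (Finsupp.single w 1))
        - act g j₀ (Sum.inr j) (act g j₀ (Sum.inl j) (Finsupp.single w 1))) = 0 := by
  rw [← Finset.add_sum_erase _ _ (Finset.mem_univ j₀)]
  have hinr : ∀ j : Fin g, ∀ m : Mw g, act g j₀ (Sum.inr j) m = prep g (Sum.inr j) m := by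
    intro j m; rw [act_of_ne g j₀ _ (by simp)]
  have hj₀ :
      act g j₀ (Sum.inl j₀) (act g j₀ (Sum.inr j₀) (Finsupp.single w 1))
        - act g j₀ (Sum.inr j₀) (act g j₀ (Sum.inl j₀) (Finsupp.single w 1))
      = - ∑ j ∈ Finset.univ.erase j₀,
            (Finsupp.single (Sum.inl j :: Sum.inr j :: w) 1
              - Finsupp.single (Sum.inr j :: Sum.inl j :: w) 1) := by
    rw [hinr, prep_single, act_inl₀, act_inl₀, hinr]
    show fA g j₀ (Sum.inr j₀ :: w) - _ = _
    rw [fA, if_pos rfl]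
    abel
  rw [hj₀]
  rw [Finset.sum_congr rfl (fun j hj => ?_)]
  · abel
  · have hjne : (Sum.inl j : Xl g) ≠ Sum.inl j₀ := by
      simp [Finset.mem_erase] at hj
      simp [hj]
    simp only [hinr, act_of_ne g j₀ _ hjne, prep_single]

lemma rho_theta (g : ℕ) (j₀ : Fin g) : rho g j₀ (theta g) = 0 := by
  have h1 : rho g j₀ (theta g)
      = ∑ j : Fin g,
          (act g j₀ (Sum.inl j) * act g j₀ (Sum.inr j)
            - act g j₀ (Sum.inr j) * act g j₀ (Sum.inl j)) := by
    rw [theta, map_sum]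
    refine Finset.sum_congr rfl fun j _ => ?_
    simp only [map_sub, map_mul, rho_iota, aV, bV, rho0_single]
  rw [h1]
  apply Finsupp.lhom_ext
  intro w c
  have hc : (Finsupp.single w c : Mw g) = c • Finsupp.single w 1 := by simp
  rw [hc, map_smul, map_smul, LinearMap.sum_apply]
  simp only [LinearMap.sub_apply, Module.End.mul_apply]
  rw [key_sum]
  simp

def rhoBar (g : ℕ) (j₀ : Fin g) : A g →ₐ[ℚ] Module.End ℚ (Mw g) :=
  RingQuot.liftAlgHom ℚ ⟨rho g j₀, by
    rintro x y ⟨rfl, rfl⟩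
    rw [rho_theta]
    simp⟩

lemma rhoBar_piA (g : ℕ) (j₀ : Fin g) (t : TensorAlgebra ℚ (V g)) :
    rhoBar g j₀ (piA g t) = rho g j₀ t := by
  rw [piA, rhoBar, RingQuot.liftAlgHom_mkAlgHom_apply]

/-! ### The retraction σ -/

def sigW (g : ℕ) : List (Xl g) → A g :=
  fun w => (w.map fun x => iotaA g (Pi.single x 1)).prod

def sig (g : ℕ) : Mw g →ₗ[ℚ] A g :=
  Finsupp.lift (A g) ℚ (List (Xl g)) (sigW g)

lemma sig_single (g : ℕ) (w : List (Xl g)) (c : ℚ) :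
    sig g (Finsupp.single w c) = c • sigW g w := by
  simp [sig]

lemma sigW_cons (g : ℕ) (x : Xl g) (w : List (Xl g)) :
    sigW g (x :: w) = iotaA g (Pi.single x 1) * sigW g w := by
  simp [sigW]

lemma sig_prep (g : ℕ) (x : Xl g) (m : Mw g) :
    sig g (prep g x m) = iotaA g (Pi.single x 1) * sig g m := by
  have h : sig g ∘ₗ prep g x = LinearMap.mulLeft ℚ (iotaA g (Pi.single x 1)) ∘ₗ sig g := by
    apply Finsupp.lhom_ext
    intro w c
    simp [prep_single, sig_single, sigW_cons, mul_smul_comm]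
  exact congrFun (congrArg (fun f => f.toFun) h) m

/-- The defining relation, in `A g`. -/
lemma relA (g : ℕ) :
    ∑ j : Fin g, (iotaA g (aV g j) * iotaA g (bV g j) - iotaA g (bV g j) * iotaA g (aV g j))
      = 0 := by
  have h : piA g (theta g) = piA g 0 := RingQuot.mkAlgHom_rel ℚ ⟨rfl, rfl⟩
  rw [map_zero, theta, map_sum] at h
  rw [← h]
  refine Finset.sum_congr rfl fun j _ => ?_
  simp [iotaA]

lemma sig_fA (g : ℕ) (j₀ : Fin g) (w : List (Xl g)) :
    sig g (fA g j₀ w) = iotaA g (Pi.single (Sum.inl j₀) 1) * sigW g w := by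
  induction w with
  | nil =>
    rw [fA, sig_single]
    simp [sigW]
  | cons y w ih =>
    by_cases hy : y = Sum.inr j₀
    · subst hy
      rw [fA, if_pos rfl, map_sub, sig_prep, ih, map_sum]
      have herase : ∑ j ∈ Finset.univ.erase j₀,
          (iotaA g (aV g j) * iotaA g (bV g j) - iotaA g (bV g j) * iotaA g (aV g j))
          = -(iotaA g (aV g j₀) * iotaA g (bV g j₀) - iotaA g (bV g j₀) * iotaA g (aV g j₀)) := by
        have h := relA g
        rw [← Finset.add_sum_erase _ _ (Finset.mem_univ j₀)] at h
        rw [eq_neg_iff_add_eq_zero, add_comm]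
        exact h
      have hsum : ∀ j : Fin g,
          sig g (Finsupp.single (Sum.inl j :: Sum.inr j :: w) 1
              - Finsupp.single (Sum.inr j :: Sum.inl j :: w) 1)
          = (iotaA g (aV g j) * iotaA g (bV g j) - iotaA g (bV g j) * iotaA g (aV g j))
              * sigW g w := by
        intro j
        rw [map_sub, sig_single, sig_single, one_smul, one_smul, sigW_cons, sigW_cons,
            sigW_cons, sigW_cons]
        rw [aV, bV, sub_mul]
        simp only [mul_assoc]
      rw [Finset.sum_congr rfl (fun j _ => hsum j), ← Finset.sum_mul, herase, sigW_cons]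
      rw [aV, bV, neg_sub, sub_mul]
      simp only [mul_assoc]
      rw [sub_sub_cancel]
    · rw [fA, if_neg hy, sig_single, one_smul, sigW_cons, sigW_cons]


lemma sig_actF (g : ℕ) (j₀ : Fin g) (x : Xl g) (w : List (Xl g)) :
    sig g (actF g j₀ x w) = iotaA g (Pi.single x 1) * sigW g w := by
  by_cases hx : x = Sum.inl j₀
  · subst hx
    rw [actF, if_pos rfl, sig_fA]
  · rw [actF, if_neg hx, sig_single, one_smul, sigW_cons]

lemma sig_act (g : ℕ) (j₀ : Fin g) (x : Xl g) (m : Mw g) :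
    sig g (act g j₀ x m) = iotaA g (Pi.single x 1) * sig g m := by
  have h : sig g ∘ₗ act g j₀ x = LinearMap.mulLeft ℚ (iotaA g (Pi.single x 1)) ∘ₗ sig g := by
    apply Finsupp.lhom_ext
    intro w c
    have hc : (Finsupp.single w c : Mw g) = c • Finsupp.single w 1 := by simp
    simp only [LinearMap.coe_comp, Function.comp_apply, hc, map_smul, act_single,
      LinearMap.mulLeft_apply, sig_single, one_smul, sig_actF, mul_smul_comm]
  exact congrFun (congrArg (fun f => f.toFun) h) m

lemma sig_rho (g : ℕ) (j₀ : Fin g) (t : TensorAlgebra ℚ (V g)) (m : Mw g) :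
    sig g (rho g j₀ t m) = piA g t * sig g m := by
  induction t using TensorAlgebra.induction generalizing m with
  | algebraMap r =>
    rw [AlgHom.commutes, AlgHom.commutes, Module.algebraMap_end_apply, map_smul,
        Algebra.smul_def]
  | ι v =>
    rw [rho_iota]
    have hv : v = ∑ x : Xl g, (v x) • (Pi.single x 1 : V g) := by
      conv_lhs => rw [← Finset.univ_sum_single v]
      refine Finset.sum_congr rfl fun x _ => ?_
      rw [← Pi.single_smul, smul_eq_mul, mul_one]
    conv_lhs => rw [hv]
    rw [map_sum, LinearMap.sum_apply, map_sum]
    have lhs : ∑ x : Xl g, sig g ((rho0 g j₀ ((v x) • (Pi.single x 1 : V g))) m)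
        = (∑ x : Xl g, (v x) • iotaA g (Pi.single x 1)) * sig g m := by
      rw [Finset.sum_mul]
      refine Finset.sum_congr rfl fun x _ => ?_
      rw [map_smul, LinearMap.smul_apply, map_smul, rho0_single, sig_act, smul_mul_assoc]
    rw [lhs]
    congr 1
    have hiota : iotaA g v = ∑ x : Xl g, (v x) • iotaA g (Pi.single x 1) := by
      conv_lhs => rw [hv]
      rw [map_sum]
      exact Finset.sum_congr rfl fun x _ => by rw [map_smul]
    exact hiota.symm
  | mul a b ha hb =>
    rw [map_mul, Module.End.mul_apply, ha, hb, map_mul, mul_assoc]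
  | add a b ha hb =>
    rw [map_add, LinearMap.add_apply, map_add, ha, hb, map_add, add_mul]


lemma sig_retract (g : ℕ) (j₀ : Fin g) (u : A g) :
    sig g (rhoBar g j₀ u (Finsupp.single [] 1)) = u := by
  obtain ⟨t, rfl⟩ := RingQuot.mkAlgHom_surjective ℚ (Arel g) u
  have hp : RingQuot.mkAlgHom ℚ (Arel g) t = piA g t := rfl
  rw [hp, rhoBar_piA, sig_rho, sig_single, one_smul]
  have h1 : sigW g ([] : List (Xl g)) = 1 := by simp [sigW]
  rw [h1, mul_one]

lemma mulb_inj (g : ℕ) (j₀ : Fin g) (u : A g)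
    (h : iotaA g (bV g j₀) * u = 0) : u = 0 := by
  have h1 : rhoBar g j₀ (iotaA g (bV g j₀) * u) (Finsupp.single [] 1) = 0 := by
    rw [h]; simp
  have hbact : rhoBar g j₀ (iotaA g (bV g j₀)) = prep g (Sum.inr j₀) := by
    have : iotaA g (bV g j₀) = piA g (TensorAlgebra.ι ℚ (bV g j₀)) := rfl
    rw [this, rhoBar_piA, rho_iota, bV, rho0_single, act_of_ne g j₀ _ (by simp)]
  rw [map_mul, Module.End.mul_apply, hbact] at h1
  have hE : rhoBar g j₀ u (Finsupp.single [] 1) = 0 := by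
    have hinj : Function.Injective (prep g (Sum.inr j₀)) := by
      have : Function.Injective (List.cons (Sum.inr j₀ : Xl g)) := fun a b hab => by
        injection hab
      exact Finsupp.mapDomain_injective this
    apply hinj
    rw [h1, map_zero]
  have := sig_retract g j₀ u
  rw [hE, map_zero] at this
  exact this.symm

/-- If `g ≥ 1`, the ℚ-linear map
`∂₂ : A → V ⊗[ℚ] A`, `∂₂(u) = Σ_j (a_j ⊗ ι(b_j)·u − b_j ⊗ ι(a_j)·u)`, is injective. -/
theorem statement0 (g : ℕ) (hg : 1 ≤ g)
    (D2 : A g →ₗ[ℚ] V g ⊗[ℚ] A g)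
    (hD2 : ∀ u : A g, D2 u =
      ∑ j : Fin g,
        (aV g j ⊗ₜ[ℚ] (iotaA g (bV g j) * u) - bV g j ⊗ₜ[ℚ] (iotaA g (aV g j) * u))) :
    Function.Injective D2 := by
  set j₀ : Fin g := ⟨0, hg⟩ with hj₀
  have key : ∀ u : A g, D2 u = 0 → u = 0 := by
    intro u h0
    set Φ : V g ⊗[ℚ] A g →ₗ[ℚ] A g :=
      TensorProduct.lift ((LinearMap.lsmul ℚ (A g)).comp (LinearMap.proj (Sum.inl j₀)))
      with hΦdef
    have hΦ : Φ (D2 u) = iotaA g (bV g j₀) * u := by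
      rw [hD2, map_sum]
      rw [Finset.sum_eq_single j₀]
      · rw [map_sub, hΦdef, TensorProduct.lift.tmul, TensorProduct.lift.tmul]
        simp only [LinearMap.comp_apply, LinearMap.lsmul_apply, LinearMap.proj_apply]
        have ha : aV g j₀ (Sum.inl j₀) = 1 := by simp [aV]
        have hb : bV g j₀ (Sum.inl j₀) = 0 := by simp [bV]
        rw [ha, hb, one_smul, zero_smul, sub_zero]
      · intro j _ hj
        rw [map_sub, hΦdef, TensorProduct.lift.tmul, TensorProduct.lift.tmul]
        simp only [LinearMap.comp_apply, LinearMap.lsmul_apply, LinearMap.proj_apply]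
        have ha : aV g j (Sum.inl j₀) = 0 := by
          simp [aV, Pi.single_apply, Sum.inl.injEq]
          intro hh
          exact absurd hh.symm hj
        have hb : bV g j (Sum.inl j₀) = 0 := by simp [bV]
        rw [ha, hb, zero_smul, zero_smul, sub_zero]
      · intro hmem
        exact absurd (Finset.mem_univ j₀) hmem
    rw [h0, map_zero] at hΦ
    exact mulb_inj g j₀ u hΦ.symm
  intro u v huv
  have hz : D2 (u - v) = 0 := by rw [map_sub, huv, sub_self]
  have := key _ hz
  exact sub_eq_zero.mp this
end
end

section
/- Assume g ≥ 1. The sequence 0 → A →∂₂ V ⊗[ℚ] A →∂₁ A →ε ℚ → 0 is exact: ∂₂ is injective, range ∂₂ = ker ∂₁, range ∂₁ = ker ε, and ε is surjective. Hence this sequence is a free left-module resolution of the trivial A-module ℚ. -/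
/-!
Context: `V g` is the ℚ-vector space with basis `a₁,…,a_g, b₁,…,b_g`;
`θ g := Σ_j (a_j·b_j − b_j·a_j)` in the tensor algebra `T(V g)`;
`A g` is the quotient of `T(V g)` by the two-sided ideal generated by `θ g`
(realized as `RingQuot` of the relation identifying `θ g` with `0`), with quotient
map `piA g` and `iotaA g : V g →ₗ[ℚ] A g` the composite of the canonical map with `piA g`.
-/

open scoped TensorProduct

noncomputable section

/-- The augmentation `ε : A → ℚ`, the ℚ-algebra homomorphism induced by the algebra map
`T(V) → ℚ` killing `V` (well defined since `θ` lies in its kernel). -/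
def epsA (g : ℕ) : A g →ₐ[ℚ] ℚ :=
  RingQuot.liftAlgHom ℚ
    ⟨TensorAlgebra.lift ℚ (0 : V g →ₗ[ℚ] ℚ), by
      rintro x y ⟨rfl, rfl⟩
      simp [theta]⟩


/-!
Let `W` be the vector space on words in the letters `a_j`, `b_j`. Let `a_j` act on `W` by
prepending `a_j`, and `b_j` by prepending `b_j`, except that on words `a₀ l` the letter `b₀` also
adds a (recursively computed) representative of `θ l`. These operators satisfy the relation of
`A`, so `W` is an `A`-module, and `u ↦ u • ∅` is a linear section of the evaluation map `W → A`.
Writing elements of `A` through words in this way yields a contracting homotopy of the augmented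
complex: `s₀ u` splits off the first letter and `s₁ (v ⊗ u) = -v(b₀) • u'`, where `u'` collects the
words of `u` that start with `a₀`, with that `a₀` removed.
-/

theorem LinearMap.exact_of_homotopy {R M N P : Type*} [Semiring R] [AddCommMonoid M]
    [AddCommMonoid N] [AddCommMonoid P] [Module R M] [Module R N] [Module R P]
    {f : M →ₗ[R] N} {f' : N →ₗ[R] P} (s : N →ₗ[R] M) (t : P →ₗ[R] N)
    (hcomp : f' ∘ₗ f = 0) (hst : f ∘ₗ s + t ∘ₗ f' = LinearMap.id) : Function.Exact f f' :=
  LinearMap.exact_of_comp_of_mem_range hcomp fun y hy =>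
    ⟨s y, by simpa [hy] using LinearMap.congr_fun hst y⟩

namespace SurfaceAlgebra

abbrev Letter (g : ℕ) : Type := Fin g ⊕ Fin g

variable {g : ℕ}

def ofLetter (x : Letter g) : A g := iotaA g (Pi.single x 1)

lemma iotaA_single (x : Letter g) : iotaA g (Pi.single x 1) = ofLetter x := rfl

lemma iotaA_aV (j : Fin g) : iotaA g (aV g j) = ofLetter (.inl j) := rfl

lemma iotaA_bV (j : Fin g) : iotaA g (bV g j) = ofLetter (.inr j) := rfl

lemma iotaA_eq_sum (v : V g) : iotaA g v = ∑ x, v x • ofLetter x := by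
  conv_lhs => rw [← (Pi.basisFun ℚ (Letter g)).sum_repr v]
  simp [ofLetter]

lemma sum_commutator_ofLetter :
    ∑ j : Fin g, (ofLetter (.inl j) * ofLetter (.inr j) - ofLetter (.inr j) * ofLetter (.inl j))
      = (0 : A g) := by
  simpa [theta, piA, iotaA, ofLetter, aV, bV] using
    RingQuot.mkAlgHom_rel ℚ (show Arel g (theta g) 0 from ⟨rfl, rfl⟩)

lemma epsA_iotaA (v : V g) : epsA g (iotaA g v) = 0 := by
  simp [epsA, iotaA, piA]

def lift {B : Type*} [Ring B] [Algebra ℚ B] (f : Letter g → B)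
    (hf : ∑ j, (f (.inl j) * f (.inr j) - f (.inr j) * f (.inl j)) = 0) : A g →ₐ[ℚ] B :=
  RingQuot.liftAlgHom ℚ ⟨TensorAlgebra.lift ℚ (Fintype.linearCombination ℚ f), by
    rintro x y ⟨rfl, rfl⟩
    simpa [theta, aV, bV] using hf⟩

lemma lift_iotaA {B : Type*} [Ring B] [Algebra ℚ B] (f : Letter g → B)
    (hf : ∑ j, (f (.inl j) * f (.inr j) - f (.inr j) * f (.inl j)) = 0) (v : V g) :
    lift f hf (iotaA g v) = ∑ x, v x • f x := by
  simp [lift, iotaA, piA, Fintype.linearCombination_apply]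

lemma lift_ofLetter {B : Type*} [Ring B] [Algebra ℚ B] (f : Letter g → B)
    (hf : ∑ j, (f (.inl j) * f (.inr j) - f (.inr j) * f (.inl j)) = 0) (x : Letter g) :
    lift f hf (ofLetter x) = f x := by
  simp [ofLetter, lift_iotaA, Pi.single_apply]

def d₂ : A g →ₗ[ℚ] V g ⊗[ℚ] A g :=
  ∑ j, (TensorProduct.mk ℚ (V g) (A g) (aV g j) ∘ₗ LinearMap.mulLeft ℚ (iotaA g (bV g j)) -
    TensorProduct.mk ℚ (V g) (A g) (bV g j) ∘ₗ LinearMap.mulLeft ℚ (iotaA g (aV g j)))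

lemma d₂_apply (u : A g) :
    d₂ u = ∑ j, (aV g j ⊗ₜ[ℚ] (iotaA g (bV g j) * u) - bV g j ⊗ₜ[ℚ] (iotaA g (aV g j) * u)) := by
  simp [d₂]

def d₁ : V g ⊗[ℚ] A g →ₗ[ℚ] A g := TensorProduct.lift (LinearMap.mul ℚ (A g) ∘ₗ iotaA g)

@[simp] lemma d₁_tmul (v : V g) (u : A g) : d₁ (v ⊗ₜ u) = iotaA g v * u := rfl

lemma d₁_comp_d₂ : d₁ ∘ₗ d₂ = (0 : A g →ₗ[ℚ] A g) := by
  ext u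
  have hθ := congrArg (· * u) (sum_commutator_ofLetter (g := g))
  simp only [Finset.sum_mul, sub_mul, zero_mul, mul_assoc] at hθ
  simpa [d₂_apply, iotaA_aV, iotaA_bV] using hθ

lemma epsA_comp_d₁ : (epsA g).toLinearMap ∘ₗ d₁ = 0 := by
  ext v u
  simp [epsA_iotaA]

abbrev Words (g : ℕ) : Type := List (Letter g) →₀ ℚ

def wordEval (l : List (Letter g)) : A g := (l.map ofLetter).prod

@[simp] lemma wordEval_nil : wordEval ([] : List (Letter g)) = 1 := rfl

@[simp] lemma wordEval_cons (x : Letter g) (l : List (Letter g)) :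
    wordEval (x :: l) = ofLetter x * wordEval l := rfl

def evalWords : Words g →ₗ[ℚ] A g := Finsupp.linearCombination ℚ wordEval

@[simp] lemma evalWords_single (l : List (Letter g)) (c : ℚ) :
    evalWords (Finsupp.single l c) = c • wordEval l :=
  Finsupp.linearCombination_single ℚ c l

def consWords (x : Letter g) : Words g →ₗ[ℚ] Words g := Finsupp.lmapDomain ℚ ℚ (List.cons x)

@[simp] lemma consWords_single (x : Letter g) (l : List (Letter g)) (c : ℚ) :
    consWords x (Finsupp.single l c) = Finsupp.single (x :: l) c :=
  Finsupp.mapDomain_single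

lemma evalWords_consWords (x : Letter g) (w : Words g) :
    evalWords (consWords x w) = ofLetter x * evalWords w := by
  induction w using Finsupp.induction_linear <;> simp_all [mul_add]

def splitHead : Words g →ₗ[ℚ] V g ⊗[ℚ] A g :=
  Finsupp.linearCombination ℚ fun
    | [] => 0
    | x :: l => Pi.single x 1 ⊗ₜ wordEval l

@[simp] lemma splitHead_single_nil (c : ℚ) :
    splitHead (Finsupp.single [] c) = (0 : V g ⊗[ℚ] A g) := by
  simp [splitHead]

@[simp] lemma splitHead_single_cons (x : Letter g) (l : List (Letter g)) (c : ℚ) :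
    splitHead (Finsupp.single (x :: l) c) = c • (Pi.single x 1 ⊗ₜ wordEval l) := by
  simp [splitHead]

lemma splitHead_consWords (x : Letter g) (w : Words g) :
    splitHead (consWords x w) = Pi.single x 1 ⊗ₜ evalWords w := by
  induction w using Finsupp.induction_linear <;>
    simp_all [TensorProduct.tmul_add, TensorProduct.tmul_smul]

lemma d₁_splitHead_add (w : Words g) :
    d₁ (splitHead w) + algebraMap ℚ (A g) (epsA g (evalWords w)) = evalWords w := by
  induction w using Finsupp.induction_linear with
  | zero => simp
  | add v w hv hw => simp only [map_add]; rw [add_add_add_comm, hv, hw]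
  | single l c => cases l <;> simp [epsA_iotaA, ofLetter, Algebra.smul_def]

section

variable [NeZero g]

/-- The correction added to `b₀ a₀ l` represents `θ l = 0`; it is what makes the operators
`actLetter` satisfy the defining relation of `A`. -/
def bMul : List (Letter g) → Fin g → Words g
  | .inl i :: l, j =>
    Finsupp.single (.inr j :: .inl i :: l) 1 +
      if i = 0 ∧ j = 0 then
        ∑ k, (consWords (.inl k) (bMul l k) - Finsupp.single (.inr k :: .inl k :: l) 1)
      else 0
  | l, j => Finsupp.single (.inr j :: l) 1

def actLetter : Letter g → Module.End ℚ (Words g)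
  | .inl j => consWords (.inl j)
  | .inr j => Finsupp.linearCombination ℚ (bMul · j)

@[simp] lemma bMul_nil (j : Fin g) : bMul [] j = Finsupp.single [.inr j] 1 := rfl

@[simp] lemma bMul_cons_inr (i j : Fin g) (l : List (Letter g)) :
    bMul (.inr i :: l) j = Finsupp.single (.inr j :: .inr i :: l) 1 := rfl

lemma bMul_cons_inl (i j : Fin g) (l : List (Letter g)) :
    bMul (.inl i :: l) j = Finsupp.single (.inr j :: .inl i :: l) 1 +
      if i = 0 ∧ j = 0 then
        ∑ k, (consWords (.inl k) (bMul l k) - Finsupp.single (.inr k :: .inl k :: l) 1)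
      else 0 := by
  rw [bMul]

@[simp] lemma actLetter_inl (j : Fin g) : actLetter (.inl j) = consWords (.inl j) := rfl

@[simp] lemma actLetter_inr_single (j : Fin g) (l : List (Letter g)) (c : ℚ) :
    actLetter (.inr j) (Finsupp.single l c) = c • bMul l j :=
  Finsupp.linearCombination_single ℚ c l

lemma sum_commutator_actLetter :
    ∑ j : Fin g, (actLetter (.inl j) * actLetter (.inr j) -
      actLetter (.inr j) * actLetter (.inl j)) = 0 := by
  ext l
  simp [bMul_cons_inl, Finset.sum_add_distrib]

def act : A g →ₐ[ℚ] Module.End ℚ (Words g) := lift actLetter sum_commutator_actLetter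

@[simp] lemma act_ofLetter (x : Letter g) : act (ofLetter x) = actLetter x := lift_ofLetter _ _ x

def toWords : A g →ₗ[ℚ] Words g :=
  LinearMap.applyₗ (Finsupp.single [] 1) ∘ₗ (act (g := g)).toLinearMap

lemma toWords_ofLetter_mul (x : Letter g) (u : A g) :
    toWords (ofLetter x * u) = actLetter x (toWords u) := by
  simp [toWords]

lemma evalWords_bMul (l : List (Letter g)) (j : Fin g) :
    evalWords (bMul l j) = ofLetter (.inr j) * wordEval l := by
  induction l generalizing j with
  | nil => simp
  | cons x l ih =>
    rcases x with i | i
    · rw [bMul_cons_inl]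
      split_ifs with h
      · obtain ⟨rfl, rfl⟩ := h
        have hθ := congrArg (· * wordEval l) (sum_commutator_ofLetter (g := g))
        simp only [Finset.sum_mul, sub_mul, zero_mul, mul_assoc, Finset.sum_sub_distrib] at hθ
        simp [map_sum, evalWords_consWords, ih, hθ]
      · simp
    · simp

lemma evalWords_actLetter (x : Letter g) (w : Words g) :
    evalWords (actLetter x w) = ofLetter x * evalWords w := by
  rcases x with j | j
  · exact evalWords_consWords _ _
  · induction w using Finsupp.induction_linear <;> simp_all [mul_add, evalWords_bMul]

lemma evalWords_act (u : A g) (w : Words g) : evalWords (act u w) = u * evalWords w := by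
  obtain ⟨t, rfl⟩ := RingQuot.mkAlgHom_surjective ℚ (Arel g) u
  induction t using TensorAlgebra.induction generalizing w with
  | algebraMap q => simp [Algebra.smul_def]
  | ι v =>
    change evalWords (act (iotaA g v) w) = iotaA g v * evalWords w
    simp only [iotaA_eq_sum, map_sum, map_smul, act_ofLetter, LinearMap.sum_apply,
      LinearMap.smul_apply, evalWords_actLetter, Finset.sum_mul, smul_mul_assoc]
  | mul s t hs ht => simp only [map_mul, Module.End.mul_apply, hs, ht, mul_assoc]
  | add s t hs ht => simp only [map_add, LinearMap.add_apply, hs, ht, add_mul]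

lemma evalWords_toWords (u : A g) : evalWords (toWords u) = u := by
  simpa [toWords] using evalWords_act u (Finsupp.single [] 1)

def dropA₀ : Words g →ₗ[ℚ] A g :=
  Finsupp.linearCombination ℚ fun
    | .inl i :: l => if i = 0 then wordEval l else 0
    | _ => 0

@[simp] lemma dropA₀_single_nil (c : ℚ) : dropA₀ (Finsupp.single [] c) = (0 : A g) := by
  simp [dropA₀]

@[simp] lemma dropA₀_single_cons_inr (i : Fin g) (l : List (Letter g)) (c : ℚ) :
    dropA₀ (Finsupp.single (.inr i :: l) c) = 0 := by
  simp [dropA₀]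

@[simp] lemma dropA₀_single_cons_inl (i : Fin g) (l : List (Letter g)) (c : ℚ) :
    dropA₀ (Finsupp.single (.inl i :: l) c) = if i = 0 then c • wordEval l else 0 := by
  by_cases h : i = 0 <;> simp [dropA₀, h]

lemma dropA₀_consWords (w : Words g) : dropA₀ (consWords (.inl 0) w) = evalWords w := by
  induction w using Finsupp.induction_linear <;> simp_all

lemma splitHead_actLetter (x : Letter g) (w : Words g) :
    splitHead (actLetter x w) =
      Pi.single x 1 ⊗ₜ evalWords w + (Pi.single x 1 : V g) (.inr 0) • d₂ (dropA₀ w) := by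
  induction w using Finsupp.induction_linear with
  | zero => simp
  | add v w hv hw =>
    simp only [map_add, hv, hw, TensorProduct.tmul_add, smul_add]
    abel
  | single l c =>
    rcases x with j | j
    · simp
    rcases l with _ | ⟨i | i, l⟩
    · simp
    · rw [actLetter_inr_single, bMul_cons_inl]
      by_cases h : i = 0 ∧ j = 0
      · obtain ⟨rfl, rfl⟩ := h
        simp [splitHead_consWords, d₂_apply, evalWords_bMul, ofLetter, aV, bV]
      · rcases not_and_or.mp h with hi | hj <;> simp [*]
    · simp

def s₀ : A g →ₗ[ℚ] V g ⊗[ℚ] A g := splitHead ∘ₗ toWords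

def s₁ : V g ⊗[ℚ] A g →ₗ[ℚ] A g :=
  TensorProduct.lift ((LinearMap.proj (.inr 0)).smulRight (-(dropA₀ ∘ₗ toWords)))

@[simp] lemma s₁_tmul (v : V g) (u : A g) :
    s₁ (v ⊗ₜ u) = -(v (.inr 0) • dropA₀ (toWords u)) := by
  simp [s₁]

lemma d₁_comp_s₀_add :
    d₁ ∘ₗ s₀ + Algebra.linearMap ℚ (A g) ∘ₗ (epsA g).toLinearMap = LinearMap.id := by
  ext u
  simpa [s₀, evalWords_toWords] using d₁_splitHead_add (toWords u)

lemma s₁_comp_d₂ : s₁ ∘ₗ d₂ = (LinearMap.id : A g →ₗ[ℚ] A g) := by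
  ext u
  simp only [d₂_apply, iotaA_aV, iotaA_bV, map_sum, map_sub, s₁_tmul, LinearMap.comp_apply]
  simp [aV, bV, Pi.single_apply, toWords_ofLetter_mul, dropA₀_consWords, evalWords_toWords]

lemma d₂_comp_s₁_add : d₂ ∘ₗ s₁ + s₀ ∘ₗ d₁ = (LinearMap.id : V g ⊗[ℚ] A g →ₗ[ℚ] _) := by
  ext x u
  simp [s₀, iotaA_single, toWords_ofLetter_mul, splitHead_actLetter, evalWords_toWords]

end

end SurfaceAlgebra

open SurfaceAlgebra

/-- For `g ≥ 1`, the sequence `0 → A →∂₂ V ⊗ A →∂₁ A →ε ℚ → 0` is exact: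
`∂₂` is injective, `range ∂₂ = ker ∂₁`, `range ∂₁ = ker ε`, and `ε` is surjective. -/
theorem statement3 (g : ℕ) (hg : 1 ≤ g)
    (D2 : A g →ₗ[ℚ] V g ⊗[ℚ] A g)
    (D1 : V g ⊗[ℚ] A g →ₗ[ℚ] A g)
    (hD2 : ∀ u : A g, D2 u =
      ∑ j : Fin g,
        (aV g j ⊗ₜ[ℚ] (iotaA g (bV g j) * u) - bV g j ⊗ₜ[ℚ] (iotaA g (aV g j) * u)))
    (hD1 : ∀ (x : V g) (v : A g), D1 (x ⊗ₜ[ℚ] v) = iotaA g x * v) :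
    Function.Injective D2 ∧
      LinearMap.range D2 = LinearMap.ker D1 ∧
      LinearMap.range D1 = LinearMap.ker (epsA g).toLinearMap ∧
      Function.Surjective (epsA g) := by
  have : NeZero g := ⟨by omega⟩
  obtain rfl : D2 = d₂ := LinearMap.ext fun u => by rw [hD2, d₂_apply]
  obtain rfl : D1 = d₁ := TensorProduct.ext' fun v u => by rw [hD1, d₁_tmul]
  refine ⟨?_, ?_, ?_, fun q => ⟨algebraMap ℚ (A g) q, (epsA g).commutes q⟩⟩
  · exact Function.LeftInverse.injective (g := s₁) (LinearMap.congr_fun s₁_comp_d₂)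
  · exact (LinearMap.exact_of_homotopy s₁ s₀ d₁_comp_d₂ d₂_comp_s₁_add).linearMap_ker_eq.symm
  · exact (LinearMap.exact_of_homotopy s₀ _ epsA_comp_d₁ d₁_comp_s₀_add).linearMap_ker_eq.symm
end
end

section
/- Let X be a path-connected topological space with basepoint x. The assignment sending a loop γ : Path x x to the homotopy class of the continuous map ℓ_γ : ℝ/ℤ → X it induces (ℓ_γ(t mod 1) = γ(t) for t ∈ [0,1]) descends to a well-defined bijection from the set ConjClasses(π₁(X,x)) of conjugacy classes in the fundamental group of X at x onto the set of homotopy classes of continuous maps ℝ/ℤ → X. -/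
/-!
A loop `γ` and its circle map `ℓ_γ` determine each other, since `ℓ_γ` composed with the standard
loop `t ↦ t mod 1` of `ℝ/ℤ` is `γ`. A based homotopy of loops is a map on the square that is
constant on the vertical edges, so it descends to a free homotopy of circle maps. Rotating the
circle by half a turn is homotopic to the identity and turns `ℓ_{α·β}` into `ℓ_{β·α}`; hence
`ℓ_{q·γ·q⁻¹} ≃ ℓ_{γ·q⁻¹·q} ≃ ℓ_γ`, and conjugate classes give freely homotopic maps. Conversely, if
`F` is a free homotopy from `ℓ_{γ₁}` to `ℓ_{γ₂}` and `q` is the track of the basepoint under `F`,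
then `γ₁·q ≃ q·γ₂` (`Path.Homotopic.map_trans_evalAt`), so `[γ₁]` and `[γ₂]` are conjugate. Every
circle map `ℓ` is `ℓ_γ` for a loop `γ` at `ℓ 0`, and `q·γ·q⁻¹` for a path `q` from `x` to `ℓ 0`
is a loop at `x` with the same free class, which gives surjectivity.
-/

noncomputable section

def freeLoopSetoid (X : Type*) [TopologicalSpace X] : Setoid C(AddCircle (1 : ℝ), X) :=
  ⟨ContinuousMap.Homotopic, ContinuousMap.Homotopic.equivalence⟩

/-- `λ(X)`: the set of free homotopy classes of loops `ℝ/ℤ → X`. -/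
abbrev FreeLoopClasses (X : Type*) [TopologicalSpace X] : Type _ :=
  Quotient (freeLoopSetoid X)

open Set unitInterval

namespace AddCircle

theorem surjective_coe_unitInterval :
    Function.Surjective fun t : I => ((t : ℝ) : AddCircle (1 : ℝ)) := by
  intro z
  obtain ⟨s, hs, rfl⟩ : z ∈ ((↑) : ℝ → AddCircle (1 : ℝ)) '' Icc 0 (0 + 1) := by
    rw [coe_image_Icc_eq]; trivial
  exact ⟨⟨s, by simpa using hs⟩, rfl⟩

def standardLoop : Path (0 : AddCircle (1 : ℝ)) 0 where
  toFun t := (t : ℝ)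
  source' := by simp
  target' := by simp

variable {Y : Type*} [TopologicalSpace Y]

def liftUnitInterval (f : C(I, Y)) (h : f 0 = f 1) : C(AddCircle (1 : ℝ), Y) :=
  ⟨liftIco 1 0 (IccExtend zero_le_one f),
    liftIco_zero_continuous (by simpa using h) f.continuous.Icc_extend'.continuousOn⟩

theorem liftUnitInterval_coe (f : C(I, Y)) (h : f 0 = f 1) (t : I) :
    liftUnitInterval f h (t : ℝ) = f t := by
  rcases t.2.2.lt_or_eq with ht | ht
  · exact (liftIco_zero_coe_apply ⟨t.2.1, ht⟩).trans (IccExtend_val _ _ t)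
  · obtain rfl : t = 1 := Subtype.ext ht
    rw [Icc.coe_one, coe_period, ← coe_zero, ← h]
    exact (liftIco_zero_coe_apply ⟨le_rfl, one_pos⟩).trans (IccExtend_left _ _)

theorem liftUnitInterval_homotopic (F : C(I × I, Y)) (hF : ∀ s, F (s, 0) = F (s, 1)) :
    (liftUnitInterval (F.curry 0) (hF 0)).Homotopic (liftUnitInterval (F.curry 1) (hF 1)) := by
  let Φ := liftUnitInterval (F.comp .prodSwap).curry (ContinuousMap.ext hF)
  have hΦ (s t : I) : Φ (t : ℝ) s = F (s, t) := by
    rw [liftUnitInterval_coe]; rfl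
  refine ⟨⟨⟨fun p => Φ p.2 p.1, by fun_prop⟩, fun z => ?_, fun z => ?_⟩⟩ <;>
  · obtain ⟨t, rfl⟩ := surjective_coe_unitInterval z
    exact (hΦ _ t).trans (liftUnitInterval_coe (F.curry _) _ t).symm

end AddCircle

theorem ContinuousMap.homotopic_comp_addRight {Y G : Type*} [TopologicalSpace Y]
    [TopologicalSpace G] [AddZeroClass G] [ContinuousAdd G] [PathConnectedSpace G]
    (f : C(G, Y)) (c : G) : (f.comp (ContinuousMap.addRight c)).Homotopic f := by
  let p := PathConnectedSpace.somePath c 0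
  exact ⟨⟨⟨fun q => f (q.2 + p q.1), by fun_prop⟩, fun z => by simp [p], fun z => by simp [p]⟩⟩

namespace Path

variable {X : Type*} [TopologicalSpace X] {a b : X}

def toCircleMap (γ : Path a a) : C(AddCircle (1 : ℝ), X) :=
  AddCircle.liftUnitInterval γ.toContinuousMap (by simp)

@[simp]
theorem toCircleMap_coe (γ : Path a a) (t : I) : γ.toCircleMap (t : ℝ) = γ t :=
  AddCircle.liftUnitInterval_coe _ _ t

theorem toCircleMap_coe_eq_extend (γ : Path a a) {s : ℝ} (hs : s ∈ Icc 0 1) :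
    γ.toCircleMap s = γ.extend s := by
  rw [extend_apply _ hs]
  exact toCircleMap_coe γ ⟨s, hs⟩

theorem eq_toCircleMap {γ : Path a a} {ℓ : C(AddCircle (1 : ℝ), X)}
    (h : ∀ t : I, ℓ (t : ℝ) = γ t) : ℓ = γ.toCircleMap :=
  ContinuousMap.ext <| AddCircle.surjective_coe_unitInterval.forall.2 fun t => by
    rw [h, toCircleMap_coe]

theorem Homotopic.toCircleMap {γ₀ γ₁ : Path a a} (h : γ₀.Homotopic γ₁) :
    γ₀.toCircleMap.Homotopic γ₁.toCircleMap := by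
  obtain ⟨G⟩ := h
  convert AddCircle.liftUnitInterval_homotopic G.toContinuousMap (fun s => by simp) using 2 <;>
    unfold Path.toCircleMap <;> congr 1 <;> ext t <;> simp

theorem toCircleMap_trans_comm (α : Path a b) (β : Path b a) :
    (β.trans α).toCircleMap.Homotopic (α.trans β).toCircleMap := by
  have hrot : (α.trans β).toCircleMap.comp (.addRight ((1 / 2 : ℝ) : AddCircle (1 : ℝ))) =
      (β.trans α).toCircleMap := by
    refine eq_toCircleMap fun t => ?_
    have h0 := t.2.1
    have h1 := t.2.2
    change (α.trans β).toCircleMap (t + ((1 / 2 : ℝ) : AddCircle (1 : ℝ))) = _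
    rw [← extend_extends' (β.trans α), ← AddCircle.coe_add]
    rcases le_total (t : ℝ) (1 / 2) with ht | ht
    · rw [toCircleMap_coe_eq_extend _ ⟨by linarith, by linarith⟩,
        extend_trans_of_half_le _ _ (by linarith), extend_trans_of_le_half _ _ ht]
      congr 1; ring
    · have hwrap : (((t : ℝ) + 1 / 2 : ℝ) : AddCircle (1 : ℝ)) =
          ((t - 1 / 2 : ℝ) : AddCircle (1 : ℝ)) := by
        rw [← AddCircle.coe_add_period (p := (1 : ℝ)) ((t : ℝ) - 1 / 2)]; congr 1; ring
      rw [hwrap, toCircleMap_coe_eq_extend _ ⟨by linarith, by linarith⟩,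
        extend_trans_of_le_half _ _ (by linarith), extend_trans_of_half_le _ _ ht]
      congr 1; ring
  rw [← hrot]
  exact ContinuousMap.homotopic_comp_addRight _ _

theorem toCircleMap_conj (q : Path a b) (γ : Path b b) :
    (q.trans (γ.trans q.symm)).toCircleMap.Homotopic γ.toCircleMap :=
  (toCircleMap_trans_comm (γ.trans q.symm) q).trans <| Homotopic.toCircleMap <|
    ((Homotopic.trans_assoc _ _ _).trans ((Homotopic.refl γ).hcomp (Homotopic.symm_trans q))).trans
      (Homotopic.trans_refl γ)

theorem exists_trans_homotopic_of_homotopic {ℓ₁ ℓ₂ : C(AddCircle (1 : ℝ), X)}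
    (h : ℓ₁.Homotopic ℓ₂) {γ₁ : Path a a} {γ₂ : Path b b} (h₁ : ∀ t : I, ℓ₁ (t : ℝ) = γ₁ t)
    (h₂ : ∀ t : I, ℓ₂ (t : ℝ) = γ₂ t) : ∃ q : Path a b, (γ₁.trans q).Homotopic (q.trans γ₂) := by
  obtain rfl : ℓ₁ 0 = a := by simpa using h₁ 0
  obtain rfl : ℓ₂ 0 = b := by simpa using h₂ 0
  obtain rfl : AddCircle.standardLoop.map ℓ₁.continuous = γ₁ := Path.ext (funext h₁)
  obtain rfl : AddCircle.standardLoop.map ℓ₂.continuous = γ₂ := Path.ext (funext h₂)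
  obtain ⟨F⟩ := h
  exact ⟨F.evalAt 0, Homotopic.map_trans_evalAt F AddCircle.standardLoop⟩

theorem toCircleMap_homotopic_iff {γ₁ : Path a a} {γ₂ : Path b b} :
    γ₁.toCircleMap.Homotopic γ₂.toCircleMap ↔
      ∃ q : Path a b, (γ₁.trans q).Homotopic (q.trans γ₂) := by
  refine ⟨fun h => exists_trans_homotopic_of_homotopic h γ₁.toCircleMap_coe γ₂.toCircleMap_coe,
    fun ⟨q, hq⟩ => ?_⟩
  have hconj : γ₁.Homotopic (q.trans (γ₂.trans q.symm)) := by
    rw [← Homotopic.Quotient.eq] at hq ⊢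
    simp only [Homotopic.Quotient.mk_trans, Homotopic.Quotient.mk_symm] at hq ⊢
    calc Homotopic.Quotient.mk γ₁
        = ((Homotopic.Quotient.mk γ₁).trans (.mk q)).trans (Homotopic.Quotient.mk q).symm := by
          simp
      _ = _ := by rw [hq]; simp
  exact hconj.toCircleMap.trans (toCircleMap_conj q γ₂)

end Path

namespace FundamentalGroup

variable {X : Type*} [TopologicalSpace X] {x : X}

theorem isConj_fromPath_mk_iff {γ₁ γ₂ : Path x x} :
    IsConj (fromPath (.mk γ₁)) (fromPath (.mk γ₂)) ↔
      ∃ q : Path x x, (γ₁.trans q).Homotopic (q.trans γ₂) := by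
  refine ⟨fun ⟨c, hc⟩ => ?_, fun ⟨q, hq⟩ => ⟨toUnits (fromPath (.mk q)), ?_⟩⟩
  · obtain ⟨q, hq⟩ := Path.Homotopic.Quotient.mk_surjective (toPath c.val)
    refine ⟨q, Path.Homotopic.Quotient.eq.1 ?_⟩
    rw [Path.Homotopic.Quotient.mk_trans, Path.Homotopic.Quotient.mk_trans, hq]
    -- in `π₁`, the product `g * h` is the class of `h` followed by `g`
    exact hc
  · exact Path.Homotopic.Quotient.eq.2 hq

def toFreeLoopClass (g : FundamentalGroup X x) : FreeLoopClasses X :=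
  Quotient.lift (s := Path.Homotopic.setoid x x)
    (fun γ => Quotient.mk (freeLoopSetoid X) γ.toCircleMap)
    (fun _ _ h => Quotient.sound h.toCircleMap) (toPath g)

theorem toFreeLoopClass_fromPath_mk (γ : Path x x) :
    toFreeLoopClass (fromPath (.mk γ)) = Quotient.mk (freeLoopSetoid X) γ.toCircleMap :=
  rfl

theorem toFreeLoopClass_eq_iff {g₁ g₂ : FundamentalGroup X x} :
    toFreeLoopClass g₁ = toFreeLoopClass g₂ ↔ IsConj g₁ g₂ := by
  obtain ⟨γ₁, rfl⟩ := Path.Homotopic.Quotient.mk_surjective (toPath g₁)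
  obtain ⟨γ₂, rfl⟩ := Path.Homotopic.Quotient.mk_surjective (toPath g₂)
  rw [toFreeLoopClass_fromPath_mk, toFreeLoopClass_fromPath_mk, Quotient.eq,
    isConj_fromPath_mk_iff]
  exact Path.toCircleMap_homotopic_iff

theorem toFreeLoopClass_surjective [PathConnectedSpace X] :
    Function.Surjective (toFreeLoopClass (x := x)) := by
  rintro ⟨ℓ⟩
  let p := PathConnectedSpace.somePath x (ℓ 0)
  have hℓ : (AddCircle.standardLoop.map ℓ.continuous).toCircleMap = ℓ :=
    (Path.eq_toCircleMap fun _ => rfl).symm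
  refine ⟨fromPath (.mk (p.trans ((AddCircle.standardLoop.map ℓ.continuous).trans p.symm))),
    Quotient.sound ?_⟩
  exact (Path.toCircleMap_conj p _).trans (by rw [hℓ])

end FundamentalGroup

/-- For a path-connected space `X` with basepoint `x`, sending a loop
`γ : Path x x` to the free homotopy class of the induced map `ℝ/ℤ → X` descends to a
well-defined bijection from the conjugacy classes of `π₁(X, x)` onto `λ(X)`. -/
theorem statement5 (X : Type) [TopologicalSpace X] [PathConnectedSpace X] (x : X) :
    ∃ F : ConjClasses (FundamentalGroup X x) → FreeLoopClasses X,
      Function.Bijective F ∧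
      ∀ (γ : Path x x) (ℓ : C(AddCircle (1 : ℝ), X)),
        (∀ t : unitInterval, ℓ ((t : ℝ) : AddCircle (1 : ℝ)) = γ t) →
        F (ConjClasses.mk (FundamentalGroup.fromPath (X := TopCat.of X)
            (Quotient.mk (Path.Homotopic.setoid x x) γ))) =
          Quotient.mk (freeLoopSetoid X) ℓ := by
  refine ⟨Quotient.lift FundamentalGroup.toFreeLoopClass
    fun _ _ h => FundamentalGroup.toFreeLoopClass_eq_iff.2 h, ⟨?_, ?_⟩, ?_⟩
  · rintro ⟨g₁⟩ ⟨g₂⟩ h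
    exact ConjClasses.mk_eq_mk_iff_isConj.2 (FundamentalGroup.toFreeLoopClass_eq_iff.1 h)
  · intro c
    obtain ⟨g, hg⟩ := FundamentalGroup.toFreeLoopClass_surjective c
    exact ⟨ConjClasses.mk g, hg⟩
  · intro γ ℓ hℓ
    rw [Path.eq_toCircleMap hℓ]
    rfl
end
end

section
/- Let r ≥ 1 and let f₁,…,f_r : ℝ → ℝ be continuous. Fix t ∈ ℝ. Then for every s₀ ∈ ℝ, the function s ↦ I(f₁,…,f_r)(s,t) is differentiable at s₀ with derivative −f₁(s₀) · I(f₂,…,f_r)(s₀,t) (where for r = 1 the factor I()(s₀,t) is 1, so the derivative is −f₁(s₀)). -/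
/-! Fubini on the triangle `{s ≤ u ≤ v ≤ t}` lets one peel the iterated integral off from the
front instead of the back: `I(f₁,…,f_r)(s,t) = ∫_s^t f₁(u) · I(f₂,…,f_r)(u,t) du`. Iterated
integrals of continuous functions are jointly continuous in their endpoints, so the integrand is
continuous in `u` and the fundamental theorem of calculus at the lower limit gives the
derivative. -/

noncomputable section

open intervalIntegral

/-- Auxiliary recursion (on the reversed list): `itRev [f_k, …, f₁] s t` is the
time-ordered iterated integral `I(f₁,…,f_k)(s,t)`. -/
noncomputable def itRev : List (ℝ → ℝ) → ℝ → ℝ → ℝ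
  | [], _, _ => 1
  | f :: fs, s, t => ∫ u in s..t, f u * itRev fs s u

/-- The time-ordered iterated integral `I(f₁,…,f_r)(s,t)`, defined recursively by
`I()(s,t) = 1` and `I(f₁,…,f_k)(s,t) = ∫_s^t f_k(u) · I(f₁,…,f_{k−1})(s,u) du`. -/
noncomputable def timeOrderedIntegral (fs : List (ℝ → ℝ)) (s t : ℝ) : ℝ :=
  itRev fs.reverse s t

open MeasureTheory Set
open scoped Interval

theorem continuous_parametric_intervalIntegral_of_continuous_bounds {X E : Type*}
    [TopologicalSpace X] [NormedAddCommGroup E] [NormedSpace ℝ E] {f : X → ℝ → E}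
    (hf : Continuous (Function.uncurry f)) {a b : X → ℝ} (ha : Continuous a) (hb : Continuous b) :
    Continuous fun x => ∫ t in a x..b x, f x t := by
  have hint : ∀ x c d, IntervalIntegrable (f x) volume c d :=
    fun x c d => (hf.uncurry_left x).intervalIntegrable c d
  have hsplit : (fun x => ∫ t in a x..b x, f x t) =
      fun x => (∫ t in 0..b x, f x t) - ∫ t in 0..a x, f x t :=
    funext fun x => (integral_interval_sub_left (hint _ _ _) (hint _ _ _)).symm
  rw [hsplit]
  exact (continuous_parametric_intervalIntegral_of_continuous hf hb).sub
    (continuous_parametric_intervalIntegral_of_continuous hf ha)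

theorem continuous_itRev : ∀ {gs : List (ℝ → ℝ)}, (∀ g ∈ gs, Continuous g) →
    Continuous fun p : ℝ × ℝ => itRev gs p.1 p.2
  | [], _ => continuous_const
  | g :: gs, h => by
    obtain ⟨hg, hgs⟩ := List.forall_mem_cons.1 h
    have ih := continuous_itRev hgs
    refine continuous_parametric_intervalIntegral_of_continuous_bounds ?_ continuous_fst
      continuous_snd
    exact (hg.comp continuous_snd).mul
      (ih.comp ((continuous_fst.comp continuous_fst).prodMk continuous_snd))

theorem integral_integral_triangle_of_le {H : ℝ → ℝ → ℝ} (hH : Continuous (Function.uncurry H))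
    {s t : ℝ} (hst : s ≤ t) :
    ∫ v in s..t, ∫ u in s..v, H u v = ∫ u in s..t, ∫ v in u..t, H u v := by
  set K : ℝ → ℝ → ℝ := fun v u => if u ≤ v then H u v else 0
  have hK : IntegrableOn (Function.uncurry K) (Ι s t ×ˢ Ι s t) := by
    have hK_eq : Function.uncurry K = {p : ℝ × ℝ | p.2 ≤ p.1}.indicator fun p => H p.2 p.1 := by
      ext ⟨v, u⟩; simp [K, indicator_apply]
    rw [hK_eq]
    refine IntegrableOn.indicator ?_ (measurableSet_le measurable_snd measurable_fst)
    exact ((hH.comp continuous_swap).continuousOn.integrableOn_compact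
      (isCompact_uIcc.prod isCompact_uIcc)).mono_set
      (prod_mono uIoc_subset_uIcc uIoc_subset_uIcc)
  have inner_left : ∀ v ∈ Ι s t, ∫ u in s..v, H u v = ∫ u in s..t, K v u := by
    intro v hv
    rw [uIoc_of_le hst] at hv
    have hKv : K v = (Iic v).indicator fun u => H u v := by
      ext u; simp [K, indicator_apply]
    rw [integral_of_le hst, integral_of_le hv.1.le, hKv, setIntegral_indicator measurableSet_Iic,
      Ioc_inter_Iic, inf_eq_right.mpr hv.2]
  have inner_right : ∀ u ∈ Ι s t, ∫ v in s..t, K v u = ∫ v in u..t, H u v := by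
    intro u hu
    rw [uIoc_of_le hst] at hu
    have hKu : (fun v => K v u) = (Ici u).indicator fun v => H u v := by
      ext v; simp [K, indicator_apply]
    have hinter : Ioc s t ∩ Ici u = Icc u t := by
      ext v; simp only [mem_inter_iff, mem_Ioc, mem_Ici, mem_Icc]
      exact ⟨fun h => ⟨h.2, h.1.2⟩, fun h => ⟨⟨hu.1.trans_le h.1, h.2⟩, h.1⟩⟩
    rw [integral_of_le hst, integral_of_le hu.2, hKu, setIntegral_indicator measurableSet_Ici,
      hinter, integral_Icc_eq_integral_Ioc]
  calc ∫ v in s..t, ∫ u in s..v, H u v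
      = ∫ v in s..t, ∫ u in s..t, K v u := integral_congr_ae (.of_forall inner_left)
    _ = ∫ u in s..t, ∫ v in s..t, K v u := intervalIntegral_intervalIntegral_swap hK
    _ = ∫ u in s..t, ∫ v in u..t, H u v := integral_congr_ae (.of_forall inner_right)

theorem integral_integral_triangle {H : ℝ → ℝ → ℝ} (hH : Continuous (Function.uncurry H))
    (s t : ℝ) : ∫ v in s..t, ∫ u in s..v, H u v = ∫ u in s..t, ∫ v in u..t, H u v := by
  rcases le_total s t with hst | hts
  · exact integral_integral_triangle_of_le hH hst
  have hflip : ∀ (F : ℝ → ℝ → ℝ) (a b : ℝ → ℝ),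
      ∫ x in s..t, ∫ y in a x..b x, F x y = ∫ x in t..s, ∫ y in b x..a x, F x y := by
    intro F a b
    simp only [integral_symm t s, integral_symm (b _) (a _), intervalIntegral.integral_neg,
      neg_neg]
  calc ∫ v in s..t, ∫ u in s..v, H u v
      = ∫ v in t..s, ∫ u in v..s, H u v := hflip (fun v u => H u v) (fun _ => s) id
    _ = ∫ u in t..s, ∫ v in t..u, H u v :=
      (integral_integral_triangle_of_le (H := fun u v => H v u) (hH.comp continuous_swap) hts).symm
    _ = ∫ u in s..t, ∫ v in u..t, H u v := (hflip H id fun _ => t).symm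

theorem itRev_append_singleton {f : ℝ → ℝ} (hf : Continuous f) :
    ∀ {gs : List (ℝ → ℝ)}, (∀ g ∈ gs, Continuous g) → ∀ s t : ℝ,
      itRev (gs ++ [f]) s t = ∫ u in s..t, f u * itRev gs u t
  | [], _, s, t => by simp [itRev]
  | g :: gs, h, s, t => by
    obtain ⟨hg, hgs⟩ := List.forall_mem_cons.1 h
    have hH : Continuous (Function.uncurry fun u v => g v * (f u * itRev gs u v)) :=
      (hg.comp continuous_snd).mul ((hf.comp continuous_fst).mul (continuous_itRev hgs))
    calc itRev ((g :: gs) ++ [f]) s t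
        = ∫ v in s..t, g v * ∫ u in s..v, f u * itRev gs u v := by
          simp only [List.cons_append, itRev, itRev_append_singleton hf hgs]
      _ = ∫ v in s..t, ∫ u in s..v, g v * (f u * itRev gs u v) := by
          simp only [intervalIntegral.integral_const_mul]
      _ = ∫ u in s..t, ∫ v in u..t, g v * (f u * itRev gs u v) :=
          integral_integral_triangle hH s t
      _ = ∫ u in s..t, f u * ∫ v in u..t, g v * itRev gs u v := by
          simp only [← intervalIntegral.integral_const_mul, mul_left_comm (f _)]
      _ = ∫ u in s..t, f u * itRev (g :: gs) u t := rfl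

theorem timeOrderedIntegral_cons {f : ℝ → ℝ} {fs : List (ℝ → ℝ)} (hf : Continuous f)
    (hfs : ∀ g ∈ fs, Continuous g) (s t : ℝ) :
    timeOrderedIntegral (f :: fs) s t = ∫ u in s..t, f u * timeOrderedIntegral fs u t := by
  rw [timeOrderedIntegral, List.reverse_cons,
    itRev_append_singleton hf (fun g hg => hfs g (List.mem_reverse.1 hg))]
  rfl

theorem continuous_timeOrderedIntegral {fs : List (ℝ → ℝ)} (hfs : ∀ g ∈ fs, Continuous g) :
    Continuous fun p : ℝ × ℝ => timeOrderedIntegral fs p.1 p.2 :=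
  continuous_itRev fun g hg => hfs g (List.mem_reverse.1 hg)

/-- For `r ≥ 1` continuous functions `f₁,…,f_r` (here `f :: fs`) and fixed
`t`, the function `s ↦ I(f₁,…,f_r)(s,t)` is differentiable at every `s₀` with derivative
`−f₁(s₀) · I(f₂,…,f_r)(s₀,t)`. -/
theorem statement10 (f : ℝ → ℝ) (fs : List (ℝ → ℝ))
    (hf : Continuous f) (hfs : ∀ g ∈ fs, Continuous g) (t s₀ : ℝ) :
    HasDerivAt (fun s => timeOrderedIntegral (f :: fs) s t)
      (-(f s₀) * timeOrderedIntegral fs s₀ t) s₀ := by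
  have hG : Continuous fun u => f u * timeOrderedIntegral fs u t :=
    hf.mul ((continuous_timeOrderedIntegral hfs).comp (Continuous.prodMk_left t))
  simp only [timeOrderedIntegral_cons hf hfs, neg_mul]
  exact integral_hasDerivAt_left (hG.intervalIntegrable s₀ t)
    hG.stronglyMeasurable.stronglyMeasurableAtFilter hG.continuousAt
end
end
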